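/- arXiv:2511.01552 — 12 statements merged into one kernel-verified Lean document; each statement's English description precedes it below -/
import Mathlib

section
/- For any group G, the center Z(G) is contained in Univ(G), and Univ(G) is contained in the second center Z₂(G). -/
/-- `arrow x y` means `⟨x⟩` is normal in `⟨x, y⟩`. -/
def arrow {G : Type*} [Group G] (x y : G) : Prop :=
  ((Subgroup.zpowers x).subgroupOf (Subgroup.closure {x, y})).Normal

/-- `isUniv x` : `x` is a bidirectional universal vertex. -/
def isUniv {G : Type*} [Group G] (x : G) : Prop :=
  ∀ y : G, arrow x y ∧ arrow y x

lemma normal_subgroupOf_of_le_normalizer {G : Type*} [Group G] {H K : Subgroup G}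
    (h : K ≤ Subgroup.normalizer (H : Set G)) : (H.subgroupOf K).Normal := by
  constructor
  rintro ⟨n, hnK⟩ hn ⟨g, hgK⟩
  rw [Subgroup.mem_subgroupOf] at hn ⊢
  simpa using (Subgroup.mem_normalizer_iff.mp (h hgK) n).mp hn

lemma central_mem_normalizer {G : Type*} [Group G] {x : G}
    (hx : x ∈ Subgroup.center G) (H : Subgroup G) : x ∈ Subgroup.normalizer (H : Set G) := by
  rw [Subgroup.mem_normalizer_iff]
  intro h
  have : x * h * x⁻¹ = h := by
    rw [(Subgroup.mem_center_iff.mp hx h).symm]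
    group
  rw [this]

lemma central_conj {G : Type*} [Group G] {x : G} (hx : x ∈ Subgroup.center G)
    (a w : G) (hw : w ∈ Subgroup.zpowers x) : a * w * a⁻¹ = w := by
  obtain ⟨k, rfl⟩ := hw
  show a * x ^ k * a⁻¹ = x ^ k
  have hc : (x ^ k : G) ∈ Subgroup.center G := Subgroup.zpow_mem _ hx k
  rw [Subgroup.mem_center_iff.mp hc a]
  group

lemma mem_normalizer_of_central {G : Type*} [Group G] {x : G}
    (hx : x ∈ Subgroup.center G) (g : G) : g ∈ Subgroup.normalizer (Subgroup.zpowers x : Set G) := by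
  rw [Subgroup.mem_normalizer_iff]
  intro h
  constructor
  · intro hh
    rw [central_conj hx g h hh]
    exact hh
  · intro hh
    have h1 : g⁻¹ * (g * h * g⁻¹) * (g⁻¹)⁻¹ = g * h * g⁻¹ := central_conj hx g⁻¹ _ hh
    have h2 : g⁻¹ * (g * h * g⁻¹) * (g⁻¹)⁻¹ = h := by group
    rw [h2] at h1
    rw [h1]
    exact hh

lemma conj_mem_of_arrow {G : Type*} [Group G] {x y : G} (h : arrow x y) :
    y * x * y⁻¹ ∈ Subgroup.zpowers x := by
  have hx : x ∈ Subgroup.closure ({x, y} : Set G) :=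
    Subgroup.subset_closure (Set.mem_insert _ _)
  have hy : y ∈ Subgroup.closure ({x, y} : Set G) :=
    Subgroup.subset_closure (Set.mem_insert_of_mem _ rfl)
  have hmem : (⟨x, hx⟩ : Subgroup.closure ({x, y} : Set G)) ∈
      (Subgroup.zpowers x).subgroupOf (Subgroup.closure {x, y}) := by
    rw [Subgroup.mem_subgroupOf]
    exact Subgroup.mem_zpowers x
  have h2 := h.conj_mem _ hmem ⟨y, hy⟩
  rw [Subgroup.mem_subgroupOf] at h2
  simpa using h2

lemma key_sq {G : Type*} [Group G] {x g : G} {m n : ℤ}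
    (hm : g * x * g⁻¹ = x ^ m) (hn : x * g * x⁻¹ = g ^ n) :
    x ^ ((1 - m) ^ 2) = 1 := by
  have hC1 : x * g * x⁻¹ * g⁻¹ = x ^ (1 - m) := by
    have h' : g * x⁻¹ * g⁻¹ = x ^ (-m) := by
      rw [zpow_neg, ← hm]; group
    calc x * g * x⁻¹ * g⁻¹ = x * (g * x⁻¹ * g⁻¹) := by group
      _ = x * x ^ (-m) := by rw [h']
      _ = x ^ (1 - m) := by rw [sub_eq_add_neg, zpow_add, zpow_one]
  have hC2 : x * g * x⁻¹ * g⁻¹ = g ^ (n - 1) := by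
    rw [hn, sub_eq_add_neg, zpow_add, zpow_neg, zpow_one]
  have hconj : g * (x * g * x⁻¹ * g⁻¹) * g⁻¹ = x * g * x⁻¹ * g⁻¹ := by
    rw [hC2]
    group
  have hconj2 : g * (x * g * x⁻¹ * g⁻¹) * g⁻¹ = x ^ (m * (1 - m)) := by
    rw [hC1, show g * x ^ (1 - m) * g⁻¹ = (g * x * g⁻¹) ^ (1 - m) from (conj_zpow).symm,
      hm, ← zpow_mul]
  have heq : x ^ (m * (1 - m)) = x ^ (1 - m) := by rw [← hconj2, hconj, hC1]
  have h1 : x ^ (m * (1 - m) - (1 - m)) = 1 := by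
    rw [zpow_sub, heq, mul_inv_cancel]
  have h2 : x ^ (-((1 - m) ^ 2)) = 1 := by
    rw [show -((1 - m) ^ 2) = m * (1 - m) - (1 - m) by ring]
    exact h1
  rw [zpow_neg, inv_eq_one] at h2
  exact h2

lemma dvd_mul_of_dvd_sq {a u v : ℤ} (hu : a ∣ u ^ 2) (hv : a ∣ v ^ 2) : a ∣ u * v := by
  have h : a ^ 2 ∣ (u * v) ^ 2 := by
    rw [mul_pow, sq a]
    exact mul_dvd_mul hu hv
  exact (Int.pow_dvd_pow_iff (two_ne_zero)).mp h

theorem stmt4 {G : Type*} [Group G] :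
    ((Subgroup.center G : Set G) ⊆ {x : G | isUniv x}) ∧
      {x : G | isUniv x} ⊆ (upperCentralSeries G 2 : Set G) := by
  constructor
  · -- center ⊆ Univ
    intro x hx
    intro y
    constructor
    · -- arrow x y
      apply normal_subgroupOf_of_le_normalizer
      intro g _
      exact mem_normalizer_of_central hx g
    · -- arrow y x
      apply normal_subgroupOf_of_le_normalizer
      rw [Subgroup.closure_le]
      rintro z hz
      rcases hz with rfl | hz
      · exact Subgroup.le_normalizer (Subgroup.mem_zpowers z)
      · rcases hz with rfl
        exact central_mem_normalizer hx _
  · -- Univ ⊆ Z₂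
    intro x hx
    have hxm : ∀ g : G, ∃ m : ℤ, g * x * g⁻¹ = x ^ m := by
      intro g
      obtain ⟨m, hm⟩ := Subgroup.mem_zpowers_iff.mp (conj_mem_of_arrow (hx g).1)
      exact ⟨m, hm.symm⟩
    have hxn : ∀ g : G, ∃ n : ℤ, x * g * x⁻¹ = g ^ n := by
      intro g
      obtain ⟨n, hn⟩ := Subgroup.mem_zpowers_iff.mp (conj_mem_of_arrow (hx g).2)
      exact ⟨n, hn.symm⟩
    show x ∈ Subgroup.upperCentralSeries G 2
    rw [show (2 : ℕ) = 1 + 1 from rfl, mem_upperCentralSeries_succ_iff]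
    intro y
    rw [upperCentralSeries_one]
    obtain ⟨m, hm⟩ := hxm y
    obtain ⟨n, hn⟩ := hxn y
    have hkey : x ^ ((1 - m) ^ 2) = 1 := key_sq hm hn
    have hC1 : x * y * x⁻¹ * y⁻¹ = x ^ (1 - m) := by
      have h' : y * x⁻¹ * y⁻¹ = x ^ (-m) := by
        rw [zpow_neg, ← hm]; group
      calc x * y * x⁻¹ * y⁻¹ = x * (y * x⁻¹ * y⁻¹) := by group
        _ = x * x ^ (-m) := by rw [h']
        _ = x ^ (1 - m) := by rw [sub_eq_add_neg, zpow_add, zpow_one]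
    rw [Subgroup.mem_center_iff]
    intro z
    obtain ⟨k, hk⟩ := hxm z
    obtain ⟨n', hn'⟩ := hxn z
    have hkeyz : x ^ ((1 - k) ^ 2) = 1 := key_sq hk hn'
    have hdvd : x ^ ((1 - k) * (1 - m)) = 1 := by
      rw [← orderOf_dvd_iff_zpow_eq_one] at hkey hkeyz ⊢
      exact dvd_mul_of_dvd_sq hkeyz hkey
    have hconj : z * (x * y * x⁻¹ * y⁻¹) * z⁻¹ = x * y * x⁻¹ * y⁻¹ := by
      rw [hC1, show z * x ^ (1 - m) * z⁻¹ = (z * x * z⁻¹) ^ (1 - m) from (conj_zpow).symm,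
        hk, ← zpow_mul]
      have : k * (1 - m) = (1 - m) + (-((1 - k) * (1 - m))) := by ring
      rw [this, zpow_add, zpow_neg, hdvd, inv_one, mul_one]
    calc z * (x * y * x⁻¹ * y⁻¹) = (z * (x * y * x⁻¹ * y⁻¹) * z⁻¹) * z := by group
      _ = (x * y * x⁻¹ * y⁻¹) * z := by rw [hconj]
end

section
/- For a group G, Univ(G) = {1} if and only if Z(G) = {1}. -/
open Subgroup in
lemma subgroupOf_normal_of_le_normalizer {G : Type*} [Group G] {K H : Subgroup G}
    (h : H ≤ Subgroup.normalizer (K : Set G)) : (K.subgroupOf H).Normal := by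
  constructor
  intro n hn g
  rw [Subgroup.mem_subgroupOf] at hn ⊢
  have := (Subgroup.mem_normalizer_iff.mp (h g.2) (n : G)).mp hn
  simpa using this

open Subgroup in
lemma isUniv_of_central {G : Type*} [Group G] {z : G} (hz : z ∈ Subgroup.center G) :
    isUniv z := by
  intro y
  constructor
  · -- zpowers z normal in closure {z, y}: z is central
    constructor
    intro n hn g
    rw [Subgroup.mem_subgroupOf] at hn ⊢
    obtain ⟨k, hk⟩ := id hn
    have hc : (g : G) * (n : G) * (g : G)⁻¹ = (n : G) := by
      have hnc : (n : G) ∈ Subgroup.center G := by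
        rw [← hk]
        exact Subgroup.zpow_mem _ hz k
      rw [Subgroup.mem_center_iff.mp hnc (g : G)]
      group
    simpa [hc] using hn
  · -- zpowers y normal in closure {y, z}
    apply subgroupOf_normal_of_le_normalizer
    rw [Subgroup.closure_le]
    rintro w (rfl | hw)
    · exact Subgroup.le_normalizer (Subgroup.mem_zpowers w)
    · simp only [Set.mem_singleton_iff] at hw
      subst hw
      intro t
      constructor <;> intro ht
      · have := Subgroup.mem_center_iff.mp hz t
        rwa [show w * t * w⁻¹ = t by
          rw [← Subgroup.mem_center_iff.mp hz t]; group]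
      · rwa [show w * t * w⁻¹ = t by
          rw [← Subgroup.mem_center_iff.mp hz t]; group] at ht

open Subgroup in
lemma isUniv_eq_one {G : Type*} [Group G] {x : G}
    (hx : isUniv x) (hZ : Subgroup.center G = ⊥) : x = 1 := by
  classical
  -- Step 1: for every g, g * x * g⁻¹ is a power of x
  have H1 : ∀ g : G, g * x * g⁻¹ ∈ zpowers x := by
    intro g
    have harr := (hx g).1
    have hxm : x ∈ closure ({x, g} : Set G) :=
      subset_closure (by simp)
    have hgm : g ∈ closure ({x, g} : Set G) :=
      subset_closure (by simp)
    have hn : (⟨x, hxm⟩ : closure ({x, g} : Set G)) ∈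
        (zpowers x).subgroupOf (closure ({x, g} : Set G)) := by
      rw [Subgroup.mem_subgroupOf]; exact mem_zpowers x
    have := harr.conj_mem _ hn ⟨g, hgm⟩
    rw [Subgroup.mem_subgroupOf] at this
    simpa using this
  -- Step 2: for every g, x * g * x⁻¹ is a power of g
  have H2 : ∀ g : G, x * g * x⁻¹ ∈ zpowers g := by
    intro g
    have harr := (hx g).2
    have hxm : x ∈ closure ({g, x} : Set G) :=
      subset_closure (by simp)
    have hgm : g ∈ closure ({g, x} : Set G) :=
      subset_closure (by simp)
    have hn : (⟨g, hgm⟩ : closure ({g, x} : Set G)) ∈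
        (zpowers g).subgroupOf (closure ({g, x} : Set G)) := by
      rw [Subgroup.mem_subgroupOf]; exact mem_zpowers g
    have := harr.conj_mem _ hn ⟨x, hxm⟩
    rw [Subgroup.mem_subgroupOf] at this
    simpa using this
  -- Step 3: key quantitative fact
  have key : ∀ g : G, ∃ a : ℤ, g * x * g⁻¹ = x ^ a ∧ x ^ ((a - 1) ^ 2) = 1 := by
    intro g
    obtain ⟨a, ha⟩ := Subgroup.mem_zpowers_iff.mp (H1 g)
    refine ⟨a, ha.symm, ?_⟩
    -- c := x ^ (a - 1) equals g^(1-m), hence commutes with g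
    obtain ⟨m, hm⟩ := Subgroup.mem_zpowers_iff.mp (H2 g)
    have hc : x ^ (a - 1) = g ^ (1 - m) := by
      have h1 : x ^ (a - 1) = g * x * g⁻¹ * x⁻¹ := by
        rw [← ha]; rw [zpow_sub, zpow_one]
      have h2 : x * g⁻¹ * x⁻¹ = g ^ (-m) := by
        have : (x * g * x⁻¹)⁻¹ = (g ^ m)⁻¹ := by rw [hm]
        rw [← zpow_neg] at this
        simpa [mul_assoc] using this
      rw [h1, zpow_sub, zpow_one]
      rw [show g * x * g⁻¹ * x⁻¹ = g * (x * g⁻¹ * x⁻¹) by group, h2, ← zpow_neg,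
        ← zpow_one_add]
    have hcomm : g * x ^ (a - 1) * g⁻¹ = x ^ (a - 1) := by
      rw [hc]
      group
    have hconj : g * x ^ (a - 1) * g⁻¹ = x ^ (a * (a - 1)) := by
      rw [zpow_mul, ha, conj_zpow]
    have : x ^ (a * (a - 1)) = x ^ (a - 1) := by rw [← hconj, hcomm]
    have : x ^ (a * (a - 1) - (a - 1)) = 1 := by
      rw [zpow_sub, this, mul_inv_cancel]
    convert this using 2
    ring
  -- Step 4: orderOf x divides (a-1)*(b-1) for any two such exponents
  have hdvd : ∀ a b : ℤ, x ^ ((a - 1) ^ 2) = 1 → x ^ ((b - 1) ^ 2) = 1 →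
      x ^ ((a - 1) * (b - 1)) = 1 := by
    intro a b hA hB
    rw [← orderOf_dvd_iff_zpow_eq_one] at hA hB ⊢
    set n : ℤ := (orderOf x : ℤ) with hn
    by_cases h0 : n = 0
    · rw [h0] at hA hB ⊢
      have ha0 : a - 1 = 0 := by
        have := zero_dvd_iff.mp hA
        exact pow_eq_zero_iff (by norm_num) |>.mp this
      rw [ha0]; simp
    · have : n ^ 2 ∣ ((a - 1) * (b - 1)) ^ 2 := by
        rw [mul_pow, pow_two]
        exact mul_dvd_mul hA hB
      exact (Int.pow_dvd_pow_iff (by norm_num)).mp this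
  -- Step 5: each x^(a-1) is central, hence trivial
  have hcen : ∀ g : G, g * x * g⁻¹ = x := by
    intro g
    obtain ⟨a, ha, ha2⟩ := key g
    have hc_central : x ^ (a - 1) ∈ Subgroup.center G := by
      rw [Subgroup.mem_center_iff]
      intro k
      obtain ⟨b, hb, hb2⟩ := key k
      have h1 : k * x ^ (a - 1) * k⁻¹ = x ^ (b * (a - 1)) := by
        rw [zpow_mul, ← hb, conj_zpow]
      have h2 : x ^ (b * (a - 1)) = x ^ (a - 1) := by
        have : x ^ (b * (a - 1) - (a - 1)) = 1 := by
          have : b * (a - 1) - (a - 1) = (a - 1) * (b - 1) := by ring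
          rw [this]
          exact hdvd a b ha2 hb2
        rw [zpow_sub] at this
        exact mul_inv_eq_one.mp this
      have := h1.trans h2
      calc k * x ^ (a - 1) = k * x ^ (a - 1) * k⁻¹ * k := by group
        _ = x ^ (a - 1) * k := by rw [this]
    have : x ^ (a - 1) = 1 := by
      rw [hZ] at hc_central
      simpa using hc_central
    have hgx : g * x * g⁻¹ = x := by
      rw [ha, show a = 1 + (a - 1) by ring, zpow_add, this, zpow_one, mul_one]
    exact hgx
  have : x ∈ Subgroup.center G := by
    rw [Subgroup.mem_center_iff]
    intro g
    calc g * x = g * x * g⁻¹ * g := by group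
      _ = x * g := by rw [hcen g]
  rw [hZ] at this
  simpa using this

theorem stmt5 {G : Type*} [Group G] :
    {x : G | isUniv x} = {1} ↔ Subgroup.center G = ⊥ := by
  constructor
  · intro h
    rw [Subgroup.eq_bot_iff_forall]
    intro z hz
    have : z ∈ ({x : G | isUniv x} : Set G) := isUniv_of_central hz
    rw [h] at this
    simpa using this
  · intro hZ
    ext x
    simp only [Set.mem_setOf_eq, Set.mem_singleton_iff]
    constructor
    · intro hx; exact isUniv_eq_one hx hZ
    · rintro rfl
      exact isUniv_of_central (Subgroup.one_mem _)
end

section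
/- If x ∈ Univ(G), then x^m ∈ Univ(G) for every integer m, and x^g ∈ Univ(G) for every g ∈ G. Consequently Univ(G) is closed under powers and conjugation. -/
lemma arrow_iff {G : Type*} [Group G] (x y : G) :
    arrow x y ↔ ∀ a ∈ Subgroup.zpowers x, ∀ k ∈ Subgroup.closure {x, y},
      k * a * k⁻¹ ∈ Subgroup.zpowers x := by
  have hxmem : Subgroup.zpowers x ≤ Subgroup.closure ({x, y} : Set G) := by
    rw [Subgroup.zpowers_le]
    exact Subgroup.subset_closure (by simp)
  constructor
  · intro h a ha k hk
    have := h.conj_mem ⟨a, hxmem ha⟩ (by rwa [Subgroup.mem_subgroupOf]) ⟨k, hk⟩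
    rwa [Subgroup.mem_subgroupOf] at this
  · intro h
    constructor
    intro n hn k
    rw [Subgroup.mem_subgroupOf] at hn ⊢
    exact h n hn k k.2

lemma arrow_map {G : Type*} [Group G] (φ : G ≃* G) {x y : G} (h : arrow x y) :
    arrow (φ x) (φ y) := by
  rw [arrow_iff] at h ⊢
  intro a ha k hk
  have hz : Subgroup.zpowers (φ x) = (Subgroup.zpowers x).map φ.toMonoidHom :=
    (MonoidHom.map_zpowers φ.toMonoidHom x).symm
  have hc : Subgroup.closure ({φ x, φ y} : Set G)
      = (Subgroup.closure {x, y}).map φ.toMonoidHom := by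
    rw [MonoidHom.map_closure, Set.image_pair]; rfl
  rw [hz] at ha ⊢
  rw [hc] at hk
  obtain ⟨a', ha', rfl⟩ := ha
  obtain ⟨k', hk', rfl⟩ := hk
  exact ⟨k' * a' * k'⁻¹, h a' ha' k' hk', by simp⟩

lemma isUniv_zpow {G : Type*} [Group G] {x : G} (hx : isUniv x) (m : ℤ) :
    isUniv (x ^ m) := by
  intro y
  have h1 := (hx y).1
  have h2 := (hx y).2
  rw [arrow_iff] at h1 h2
  have hsub : Subgroup.closure ({x ^ m, y} : Set G) ≤ Subgroup.closure {x, y} := by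
    rw [Subgroup.closure_le]
    rintro z (rfl | rfl)
    · exact Subgroup.zpow_mem _ (Subgroup.subset_closure (by simp)) m
    · exact Subgroup.subset_closure (by simp)
  constructor
  · rw [arrow_iff]
    intro a ha k hk
    obtain ⟨n, rfl⟩ := ha
    have hk' := hsub hk
    obtain ⟨j, hj⟩ := h1 x (Subgroup.mem_zpowers x) k hk'
    refine ⟨j * n, ?_⟩
    have hc : k * (x ^ m) ^ n * k⁻¹ = (k * x * k⁻¹) ^ (m * n) := by
      rw [conj_zpow, ← zpow_mul]
    show (x ^ m) ^ (j * n) = k * (x ^ m) ^ n * k⁻¹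
    rw [hc, ← hj]
    show (x ^ m) ^ (j * n) = (x ^ j) ^ (m * n)
    rw [← zpow_mul, ← zpow_mul]
    congr 1
    ring
  · rw [arrow_iff]
    intro a ha k hk
    have hsub2 : Subgroup.closure ({y, x ^ m} : Set G) ≤ Subgroup.closure {y, x} := by
      rw [Subgroup.closure_le]
      rintro z (rfl | rfl)
      · exact Subgroup.subset_closure (by simp)
      · exact Subgroup.zpow_mem _ (Subgroup.subset_closure (by simp)) m
    exact h2 a ha k (hsub2 hk)

theorem stmt6 {G : Type*} [Group G] {x : G} (hx : isUniv x) :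
    (∀ m : ℤ, isUniv (x ^ m)) ∧ (∀ g : G, isUniv (g⁻¹ * x * g)) := by
  refine ⟨fun m => isUniv_zpow hx m, ?_⟩
  intro g y
  have h := hx (g * y * g⁻¹)
  set φ : G ≃* G := MulAut.conj g⁻¹ with hφ
  have e1 : φ x = g⁻¹ * x * g := by simp [hφ, MulAut.conj_apply]
  have e2 : φ (g * y * g⁻¹) = y := by simp [hφ, MulAut.conj_apply]; group
  constructor
  · have := arrow_map φ h.1
    rwa [e1, e2] at this
  · have := arrow_map φ h.2
    rwa [e1, e2] at this
end

section
/- If x ∈ Univ(G) has order 2, then x lies in the center of G. -/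
theorem stmt7 {G : Type*} [Group G] {x : G} (hx : isUniv x) (hord : orderOf x = 2) :
    x ∈ Subgroup.center G := by
  rw [Subgroup.mem_center_iff]
  intro y
  obtain ⟨hxy, -⟩ := hx y
  have hxm : x ∈ Subgroup.closure ({x, y} : Set G) :=
    Subgroup.subset_closure (by simp)
  have hym : y ∈ Subgroup.closure ({x, y} : Set G) :=
    Subgroup.subset_closure (by simp)
  have hconj : y * x * y⁻¹ ∈ Subgroup.zpowers x := by
    have := hxy.conj_mem (⟨x, hxm⟩ : Subgroup.closure ({x, y} : Set G))
      (by simp [Subgroup.mem_subgroupOf, Subgroup.mem_zpowers])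
      (⟨y, hym⟩ : Subgroup.closure ({x, y} : Set G))
    simpa [Subgroup.mem_subgroupOf] using this
  obtain ⟨n, hn⟩ := hconj
  have hx2 : x ^ (2 : ℤ) = 1 := by
    have := pow_orderOf_eq_one x
    rw [hord] at this
    exact_mod_cast this
  have hxne : x ≠ 1 := by
    intro h
    rw [h, orderOf_one] at hord
    omega
  have key : x ^ n = 1 ∨ x ^ n = x := by
    have : x ^ n = x ^ (n % 2) := by
      conv_lhs => rw [← Int.emod_add_mul_ediv n 2]
      rw [zpow_add, zpow_mul, hx2, one_zpow, mul_one]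
    rcases Int.emod_two_eq_zero_or_one n with h | h
    · left; rw [this, h, zpow_zero]
    · right; rw [this, h, zpow_one]
  have hn' : x ^ n = y * x * y⁻¹ := hn
  rcases key with h | h
  · exfalso
    rw [h] at hn'
    apply hxne
    have : x = y⁻¹ * 1 * y := by rw [hn']; group
    simpa using this
  · rw [h] at hn'
    calc y * x = (y * x * y⁻¹) * y := by group
      _ = x * y := by rw [← hn']
end

section
/- Let G be a finite group and let x, y ∈ Univ(G) be commuting elements of coprime order. Then xy ∈ Univ(G). -/
open Subgroup

/-- In a finite group, if `h g h⁻¹ ∈ ⟨g⟩` then `h` normalizes `⟨g⟩`. -/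
lemma mem_normalizer_of_conj_mem {G : Type*} [Group G] [Finite G] {g h : G}
    (hc : h * g * h⁻¹ ∈ zpowers g) : h ∈ normalizer (zpowers g : Set G) := by
  have hord : orderOf (h * g * h⁻¹) = orderOf g := by
    have := orderOf_injective (MulAut.conj h).toMonoidHom
      (MulEquiv.injective (MulAut.conj h)) g
    simpa [MulAut.conj] using this
  have hle : zpowers (h * g * h⁻¹) ≤ zpowers g := (zpowers_le).2 hc
  have heq : zpowers (h * g * h⁻¹) = zpowers g := by
    apply Subgroup.eq_of_le_of_card_ge hle
    rw [Nat.card_zpowers, Nat.card_zpowers, hord]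
  rw [mem_normalizer_iff]
  intro n
  constructor
  · rintro ⟨m, rfl⟩
    rw [← conj_zpow]
    rw [← heq]
    exact ⟨m, rfl⟩
  · intro hn
    rw [← heq] at hn
    obtain ⟨m, hm⟩ := hn
    simp only [conj_zpow] at hm
    have hg : g ^ m = n := mul_left_cancel (mul_right_cancel hm)
    exact ⟨m, hg⟩

/-- If `x` is universal then `⟨x⟩` is normal in `G`. -/
lemma zpowers_normal_of_isUniv {G : Type*} [Group G] {x : G} (hx : isUniv x) :
    (zpowers x).Normal := by
  constructor
  rintro n ⟨m, rfl⟩ h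
  have hnorm := (hx h).1
  have hxmem : x ∈ closure ({x, h} : Set G) :=
    subset_closure (by simp)
  have hhmem : h ∈ closure ({x, h} : Set G) :=
    subset_closure (by simp)
  have hxsub : (⟨x, hxmem⟩ : closure ({x, h} : Set G)) ∈
      (zpowers x).subgroupOf (closure ({x, h} : Set G)) := by
    rw [mem_subgroupOf]; exact mem_zpowers x
  have := hnorm.conj_mem _ hxsub ⟨h, hhmem⟩
  rw [mem_subgroupOf] at this
  simp only [MulMemClass.coe_mul, InvMemClass.coe_inv] at this
  have hconj : h * x ^ m * h⁻¹ = (h * x * h⁻¹) ^ m := (conj_zpow).symm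
  simp only [zpow_natCast] at *
  rw [hconj]
  exact Subgroup.zpow_mem _ this m

theorem stmt8 {G : Type*} [Group G] [Finite G] {x y : G}
    (hx : isUniv x) (hy : isUniv y) (hcomm : Commute x y)
    (hcop : Nat.Coprime (orderOf x) (orderOf y)) :
    isUniv (x * y) := by
  -- x and y are powers of x*y
  have key : ∀ (a b : G), Commute a b → Nat.Coprime (orderOf a) (orderOf b) →
      a ∈ zpowers (a * b) := by
    intro a b hab hco
    have h1 : (orderOf a : ℤ) * Nat.gcdA (orderOf a) (orderOf b) +
        (orderOf b : ℤ) * Nat.gcdB (orderOf a) (orderOf b) = 1 := by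
      have := Nat.gcd_eq_gcd_ab (orderOf a) (orderOf b)
      rw [hco] at this
      exact_mod_cast this.symm
    refine ⟨(orderOf b : ℤ) * Nat.gcdB (orderOf a) (orderOf b), ?_⟩
    show (a * b) ^ ((orderOf b : ℤ) * Nat.gcdB (orderOf a) (orderOf b)) = a
    rw [hab.mul_zpow]
    have hb : b ^ ((orderOf b : ℤ) * Nat.gcdB (orderOf a) (orderOf b)) = 1 := by
      rw [zpow_mul, zpow_natCast, pow_orderOf_eq_one, one_zpow]
    rw [hb, mul_one]
    calc a ^ ((orderOf b : ℤ) * Nat.gcdB (orderOf a) (orderOf b))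
        = a ^ ((orderOf a : ℤ) * Nat.gcdA (orderOf a) (orderOf b) +
            (orderOf b : ℤ) * Nat.gcdB (orderOf a) (orderOf b)) := by
          simp [zpow_add, zpow_mul, zpow_natCast, pow_orderOf_eq_one]
      _ = a ^ (1 : ℤ) := by rw [h1]
      _ = a := zpow_one a
  have hxmem : x ∈ zpowers (x * y) := key x y hcomm hcop
  have hymem : y ∈ zpowers (x * y) := by
    rw [hcomm.eq]
    exact key y x hcomm.symm hcop.symm
  -- ⟨x⟩ and ⟨y⟩ are normal in G
  have hxn : (zpowers x).Normal := zpowers_normal_of_isUniv hx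
  have hyn : (zpowers y).Normal := zpowers_normal_of_isUniv hy
  -- ⟨x*y⟩ is normal in G
  have hxyn : (zpowers (x * y)).Normal := by
    constructor
    rintro n ⟨m, rfl⟩ h
    have hconjmem : h * (x * y) * h⁻¹ ∈ zpowers (x * y) := by
      have h1 : h * x * h⁻¹ ∈ zpowers (x * y) :=
        (zpowers_le.2 hxmem) (hxn.conj_mem x (mem_zpowers x) h)
      have h2 : h * y * h⁻¹ ∈ zpowers (x * y) :=
        (zpowers_le.2 hymem) (hyn.conj_mem y (mem_zpowers y) h)
      have : h * (x * y) * h⁻¹ = (h * x * h⁻¹) * (h * y * h⁻¹) := by group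
      rw [this]
      exact mul_mem h1 h2
    have hconj : h * (x * y) ^ m * h⁻¹ = (h * (x * y) * h⁻¹) ^ m := (conj_zpow).symm
    simp only [zpow_natCast] at *
    rw [hconj]
    exact Subgroup.zpow_mem _ hconjmem m
  intro g
  constructor
  · -- arrow (x*y) g : ⟨x*y⟩ normal in subgroup, since normal in G
    exact hxyn.subgroupOf _
  · -- arrow g (x*y)
    unfold arrow
    -- generators of closure {g, x*y} normalize ⟨g⟩
    have hgnorm : g ∈ normalizer (zpowers g : Set G) := le_normalizer (mem_zpowers g)
    have hxnorm : x ∈ normalizer (zpowers g : Set G) := by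
      apply mem_normalizer_of_conj_mem
      have hnorm := (hx g).2
      have hgm : g ∈ closure ({g, x} : Set G) := subset_closure (by simp)
      have hxm : x ∈ closure ({g, x} : Set G) := subset_closure (by simp)
      have hgsub : (⟨g, hgm⟩ : closure ({g, x} : Set G)) ∈
          (zpowers g).subgroupOf (closure ({g, x} : Set G)) := by
        rw [mem_subgroupOf]; exact mem_zpowers g
      have := hnorm.conj_mem _ hgsub ⟨x, hxm⟩
      rwa [mem_subgroupOf] at this
    have hynorm : y ∈ normalizer (zpowers g : Set G) := by
      apply mem_normalizer_of_conj_mem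
      have hnorm := (hy g).2
      have hgm : g ∈ closure ({g, y} : Set G) := subset_closure (by simp)
      have hym : y ∈ closure ({g, y} : Set G) := subset_closure (by simp)
      have hgsub : (⟨g, hgm⟩ : closure ({g, y} : Set G)) ∈
          (zpowers g).subgroupOf (closure ({g, y} : Set G)) := by
        rw [mem_subgroupOf]; exact mem_zpowers g
      have := hnorm.conj_mem _ hgsub ⟨y, hym⟩
      rwa [mem_subgroupOf] at this
    have hKle : closure ({g, x * y} : Set G) ≤ normalizer (zpowers g : Set G) := by
      rw [closure_le]
      rintro a (rfl | rfl)
      · exact hgnorm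
      · exact mul_mem hxnorm hynorm
    constructor
    rintro ⟨n, hnK⟩ hn ⟨h, hhK⟩
    rw [mem_subgroupOf] at hn ⊢
    simp only [MulMemClass.coe_mul, InvMemClass.coe_inv]
    exact ((mem_normalizer_iff.1 (hKle hhK)) n).1 hn
end

section
/- Let G be a finite group and let x ∈ Univ(G) have prime order. Then x lies in the center Z(G). -/
theorem stmt9 {G : Type*} [Group G] [Finite G] {x : G}
    (hx : isUniv x) (hp : (orderOf x).Prime) :
    x ∈ Subgroup.center G := by
  rw [Subgroup.mem_center_iff]
  intro y
  -- set up the subgroup H = ⟨x, y⟩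
  set H := Subgroup.closure ({x, y} : Set G) with hH
  have hxH : x ∈ H := Subgroup.subset_closure (by simp)
  have hyH : y ∈ H := Subgroup.subset_closure (by simp)
  set H' := Subgroup.closure ({y, x} : Set G) with hH'
  have hHH' : H = H' := by rw [hH, hH', Set.pair_comm]
  have hxH' : x ∈ H' := hHH' ▸ hxH
  have hyH' : y ∈ H' := hHH' ▸ hyH
  obtain ⟨h1, h2⟩ := hx y
  -- c is the commutator
  set c := x⁻¹ * (y⁻¹ * x * y) with hc
  have hc1 : c ∈ Subgroup.zpowers x := by
    have hmem : (⟨x, hxH⟩ : H) ∈ (Subgroup.zpowers x).subgroupOf H := by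
      rw [Subgroup.mem_subgroupOf]; exact Subgroup.mem_zpowers x
    have := h1.conj_mem _ hmem ⟨y, hyH⟩⁻¹
    rw [Subgroup.mem_subgroupOf] at this
    simp only [InvMemClass.coe_inv, MulMemClass.coe_mul] at this
    exact (Subgroup.zpowers x).mul_mem (Subgroup.inv_mem _ (Subgroup.mem_zpowers x))
      (by convert this using 1; group)
  have hc2 : c ∈ Subgroup.zpowers y := by
    have hmem : (⟨y, hyH'⟩ : H') ∈ (Subgroup.zpowers y).subgroupOf H' := by
      rw [Subgroup.mem_subgroupOf]; exact Subgroup.mem_zpowers y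
    have := h2.conj_mem _ hmem ⟨x, hxH'⟩⁻¹
    rw [Subgroup.mem_subgroupOf] at this
    simp only [InvMemClass.coe_inv, MulMemClass.coe_mul] at this
    have h3 : x⁻¹ * y⁻¹ * x ∈ Subgroup.zpowers y := by
      have h4 := Subgroup.inv_mem _ this
      convert h4 using 1; group
    have h5 := (Subgroup.zpowers y).mul_mem h3 (Subgroup.mem_zpowers y)
    have h6 : c = x⁻¹ * y⁻¹ * x * y := by rw [hc]; group
    rw [h6]; exact h5
  by_cases hxy : x ∈ Subgroup.zpowers y
  · obtain ⟨k, hk⟩ := Subgroup.mem_zpowers_iff.mp hxy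
    have : Commute y x := hk ▸ (Commute.refl y).zpow_right k
    exact this
  · have hcone : c = 1 := by
      by_contra hne
      -- c = x ^ n for some natural n, with p ∤ n
      have := Subgroup.mem_zpowers_iff.mp hc1
      obtain ⟨n, hn⟩ := mem_powers_iff_mem_zpowers.mpr hc1
      have hpn : ¬ orderOf x ∣ n := by
        intro hd
        exact hne (hn ▸ (orderOf_dvd_iff_pow_eq_one.mp hd))
      have hcop : Nat.Coprime n (orderOf x) :=
        ((hp.coprime_iff_not_dvd).mpr hpn).symm
      -- Bezout: x ∈ zpowers c
      have hbez : IsCoprime (n : ℤ) (orderOf x : ℤ) := Int.isCoprime_iff_gcd_eq_one.mpr (by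
        simpa [Int.gcd] using hcop)
      obtain ⟨u, v, huv⟩ := hbez
      have hxmem : x ∈ Subgroup.zpowers c := by
        refine ⟨u, ?_⟩
        have : x = x ^ (u * n + v * (orderOf x) : ℤ) := by rw [huv, zpow_one]
        calc c ^ u = (x ^ (n : ℤ)) ^ u := by rw [← hn]; norm_cast
          _ = x ^ (u * n + v * (orderOf x) : ℤ) := by
              rw [zpow_add, ← zpow_mul, mul_comm (n:ℤ) u]
              simp [zpow_mul, pow_orderOf_eq_one]
          _ = x := by rw [huv, zpow_one]
      exact hxy (Subgroup.zpowers_le.mpr hc2 hxmem)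
    have e : x = y⁻¹ * x * y := by
      have h6 : x⁻¹ * (y⁻¹ * x * y) = 1 := hcone
      rwa [inv_mul_eq_one] at h6
    conv_lhs => rw [e]
    group
end

section
/- Let G = H × K be a finite direct product with gcd(|H|,|K|) = 1. Then Univ(G) = Univ(H) × Univ(K). -/
/-- `x ∈ Univ⁻(G)` : `⟨x⟩ ⊴ ⟨x,y⟩` for all `y`. -/
def isUnivM {G : Type*} [Group G] (x : G) : Prop := ∀ y : G, arrow x y

/-- `x ∈ Univ⁺(G)` : `⟨y⟩ ⊴ ⟨x,y⟩` for all `y`. -/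
def isUnivP {G : Type*} [Group G] (x : G) : Prop := ∀ y : G, arrow y x

section aux

variable {H K : Type*} [Group H] [Group K] [Finite H] [Finite K]

lemma ord_coprime (hcop : Nat.Coprime (Nat.card H) (Nat.card K)) (a : H) (b : K) : Nat.Coprime (orderOf a) (orderOf b) :=
  Nat.Coprime.coprime_dvd_right (orderOf_dvd_natCard b)
    (Nat.Coprime.coprime_dvd_left (orderOf_dvd_natCard a) hcop)

lemma fst_mem_zpowers (hcop : Nat.Coprime (Nat.card H) (Nat.card K)) (g : H × K) : ((g.1, 1) : H × K) ∈ Subgroup.zpowers g := by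
  obtain ⟨k, hk1, hk2⟩ := Nat.chineseRemainder (ord_coprime hcop g.1 g.2) 1 0
  refine ⟨(k : ℤ), ?_⟩
  have h1 : g.1 ^ k = g.1 ^ 1 := pow_eq_pow_iff_modEq.mpr hk1
  have h2 : g.2 ^ k = g.2 ^ 0 := pow_eq_pow_iff_modEq.mpr hk2
  simp only [zpow_natCast, Prod.pow_mk, Prod.pow_fst, Prod.pow_snd]
  ext <;> simp [h1, h2]

lemma snd_mem_zpowers (hcop : Nat.Coprime (Nat.card H) (Nat.card K)) (g : H × K) : ((1, g.2) : H × K) ∈ Subgroup.zpowers g := by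
  obtain ⟨k, hk1, hk2⟩ := Nat.chineseRemainder (ord_coprime hcop g.1 g.2) 0 1
  refine ⟨(k : ℤ), ?_⟩
  have h1 : g.1 ^ k = g.1 ^ 0 := pow_eq_pow_iff_modEq.mpr hk1
  have h2 : g.2 ^ k = g.2 ^ 1 := pow_eq_pow_iff_modEq.mpr hk2
  ext <;> simp [h1, h2]

lemma zpowers_eq_prod (hcop : Nat.Coprime (Nat.card H) (Nat.card K)) (g : H × K) :
    Subgroup.zpowers g = (Subgroup.zpowers g.1).prod (Subgroup.zpowers g.2) := by
  apply le_antisymm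
  · rw [Subgroup.zpowers_le]
    exact ⟨⟨1, by simp⟩, ⟨1, by simp⟩⟩
  · rintro ⟨a, b⟩ ⟨⟨m, hm⟩, ⟨n, hn⟩⟩
    simp only at hm hn
    subst hm; subst hn
    have : ((g.1 ^ m, g.2 ^ n) : H × K) = ((g.1, 1) : H × K) ^ m * ((1, g.2) : H × K) ^ n := by
      ext <;> simp
    rw [this]
    exact mul_mem (zpow_mem (fst_mem_zpowers hcop g) m)
      (zpow_mem (snd_mem_zpowers hcop g) n)

lemma closure_pair_eq_prod (hcop : Nat.Coprime (Nat.card H) (Nat.card K)) (g h : H × K) :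
    Subgroup.closure {g, h} =
      (Subgroup.closure {g.1, h.1}).prod (Subgroup.closure {g.2, h.2}) := by
  apply le_antisymm
  · rw [Subgroup.closure_le]
    rintro x (rfl | rfl) <;>
      exact ⟨Subgroup.subset_closure (by simp), Subgroup.subset_closure (by simp)⟩
  · have hg1 : ((g.1, 1) : H × K) ∈ Subgroup.closure {g, h} :=
      Subgroup.zpowers_le.mpr (Subgroup.subset_closure (by simp)) (fst_mem_zpowers hcop g)
    have hh1 : ((h.1, 1) : H × K) ∈ Subgroup.closure {g, h} :=
      Subgroup.zpowers_le.mpr (Subgroup.subset_closure (by simp)) (fst_mem_zpowers hcop h)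
    have hg2 : ((1, g.2) : H × K) ∈ Subgroup.closure {g, h} :=
      Subgroup.zpowers_le.mpr (Subgroup.subset_closure (by simp)) (snd_mem_zpowers hcop g)
    have hh2 : ((1, h.2) : H × K) ∈ Subgroup.closure {g, h} :=
      Subgroup.zpowers_le.mpr (Subgroup.subset_closure (by simp)) (snd_mem_zpowers hcop h)
    rintro ⟨a, b⟩ ⟨ha, hb⟩
    have h1 : ((a, 1) : H × K) ∈ Subgroup.closure {g, h} := by
      have : ((a, 1) : H × K) ∈ (Subgroup.closure {g.1, h.1}).map (MonoidHom.inl H K) :=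
        ⟨a, ha, rfl⟩
      rw [MonoidHom.map_closure] at this
      refine Subgroup.closure_le _ |>.mpr ?_ this
      rintro x ⟨y, (rfl | rfl), rfl⟩
      · exact hg1
      · exact hh1
    have h2 : ((1, b) : H × K) ∈ Subgroup.closure {g, h} := by
      have : ((1, b) : H × K) ∈ (Subgroup.closure {g.2, h.2}).map (MonoidHom.inr H K) :=
        ⟨b, hb, rfl⟩
      rw [MonoidHom.map_closure] at this
      refine Subgroup.closure_le _ |>.mpr ?_ this
      rintro x ⟨y, (rfl | rfl), rfl⟩
      · exact hg2
      · exact hh2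
    have : ((a, b) : H × K) = (a, 1) * (1, b) := by ext <;> simp
    rw [this]; exact mul_mem h1 h2

lemma zp_le_cl {G : Type*} [Group G] (x y : G) :
    Subgroup.zpowers x ≤ Subgroup.closure {x, y} :=
  Subgroup.zpowers_le.mpr (Subgroup.subset_closure (by simp))

lemma arrow_prod (hcop : Nat.Coprime (Nat.card H) (Nat.card K)) (g h : H × K) :
    arrow g h ↔ arrow g.1 h.1 ∧ arrow g.2 h.2 := by
  unfold arrow
  rw [Subgroup.normal_subgroupOf_iff (zp_le_cl g h),
    Subgroup.normal_subgroupOf_iff (zp_le_cl g.1 h.1),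
    Subgroup.normal_subgroupOf_iff (zp_le_cl g.2 h.2),
    zpowers_eq_prod hcop, closure_pair_eq_prod hcop]
  constructor
  · intro hN
    constructor
    · intro a k ha hk
      have := hN (a, 1) (k, 1) ⟨ha, one_mem _⟩ ⟨hk, one_mem _⟩
      simpa using this.1
    · intro a k ha hk
      have := hN (1, a) (1, k) ⟨one_mem _, ha⟩ ⟨one_mem _, hk⟩
      simpa using this.2
  · rintro ⟨h1, h2⟩ ⟨a, b⟩ ⟨c, d⟩ ⟨ha, hb⟩ ⟨hc, hd⟩
    exact ⟨h1 a c ha hc, h2 b d hb hd⟩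

end aux

theorem stmt11 {H K : Type*} [Group H] [Group K] [Finite H] [Finite K]
    (hcop : Nat.Coprime (Nat.card H) (Nat.card K)) :
    ∀ x : H × K, isUniv x ↔ isUniv x.1 ∧ isUniv x.2 := by
  intro x
  constructor
  · intro hx
    constructor
    · intro y
      have h1 := (arrow_prod hcop x (y, x.2)).mp (hx (y, x.2)).1
      have h2 := (arrow_prod hcop (y, x.2) x).mp (hx (y, x.2)).2
      exact ⟨h1.1, h2.1⟩
    · intro y
      have h1 := (arrow_prod hcop x (x.1, y)).mp (hx (x.1, y)).1
      have h2 := (arrow_prod hcop (x.1, y) x).mp (hx (x.1, y)).2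
      exact ⟨h1.2, h2.2⟩
  · rintro ⟨h1, h2⟩ y
    exact ⟨(arrow_prod hcop x y).mpr ⟨(h1 y.1).1, (h2 y.2).1⟩,
      (arrow_prod hcop y x).mpr ⟨(h1 y.1).2, (h2 y.2).2⟩⟩
end

section
/- Let G = H × K. If a ∈ Univ(H), then (a,1) ∈ Univ⁻(G), i.e. ⟨(a,1)⟩ is normal in ⟨(a,1), g⟩ for every g ∈ G. -/
theorem stmt12 {H K : Type*} [Group H] [Group K] {a : H} (ha : isUniv a) :
    ∀ g : H × K, arrow ((a, 1) : H × K) g := by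
  intro g
  have h1 := (ha g.1).1
  constructor
  intro n hn x
  rw [Subgroup.mem_subgroupOf] at hn ⊢
  obtain ⟨m, hm⟩ := hn
  have hx1 : (x : H × K).1 ∈ Subgroup.closure {a, g.1} := by
    have h2 := Subgroup.mem_map_of_mem (MonoidHom.fst H K) x.2
    rw [MonoidHom.map_closure] at h2
    refine Subgroup.closure_mono ?_ h2
    rintro y ⟨z, hz, rfl⟩
    rcases hz with rfl | rfl
    · exact Or.inl rfl
    · exact Or.inr rfl
  have haC : a ∈ Subgroup.closure {a, g.1} := Subgroup.subset_closure (Or.inl rfl)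
  have key := h1.conj_mem ((⟨a, haC⟩ : Subgroup.closure {a, g.1}) ^ m)
    (by rw [Subgroup.mem_subgroupOf]; exact ⟨m, rfl⟩) ⟨(x : H × K).1, hx1⟩
  rw [Subgroup.mem_subgroupOf] at key
  obtain ⟨j, hj⟩ := key
  refine ⟨j, ?_⟩
  have hn1 : (n : H × K).1 = a ^ m := by rw [← hm]; simp
  have hn2 : (n : H × K).2 = 1 := by rw [← hm]; simp
  have hj' : a ^ j = (x : H × K).1 * a ^ m * ((x : H × K).1)⁻¹ := by
    simpa using hj
  ext
  · simpa [hn1] using hj'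
  · simp [hn2]
end

section
/- Let G be a finite group such that for all x, y ∈ G, either ⟨x⟩ ⊴ ⟨x,y⟩ or ⟨y⟩ ⊴ ⟨x,y⟩. Then every 2-generated subgroup ⟨x,y⟩ of G is nilpotent of class at most 2, and hence G is nilpotent of class at most 3. -/
open Subgroup hiding upperCentralSeries mem_upperCentralSeries_succ_iff upperCentralSeries_one upperCentralSeries_zero
open scoped commutatorElement

section Aux
variable {G : Type*} [Group G]

lemma arrow_conj {u v : G} (hA : arrow u v) {g : G}
    (hg : g ∈ closure ({u, v} : Set G)) : g * u * g⁻¹ ∈ zpowers u := by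
  have hu : u ∈ closure ({u, v} : Set G) := subset_closure (Set.mem_insert _ _)
  have h1 : (⟨u, hu⟩ : closure ({u, v} : Set G)) ∈
      (zpowers u).subgroupOf (closure {u, v}) := by
    rw [Subgroup.mem_subgroupOf]; exact mem_zpowers u
  have h2 := hA.conj_mem _ h1 ⟨g, hg⟩
  rw [Subgroup.mem_subgroupOf] at h2
  simpa using h2

lemma closure_pair {a b c d : G} (h1 : a ∈ closure ({c, d} : Set G))
    (h2 : b ∈ closure ({c, d} : Set G)) (h3 : c ∈ closure ({a, b} : Set G))
    (h4 : d ∈ closure ({a, b} : Set G)) :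
    closure ({a, b} : Set G) = closure ({c, d} : Set G) := by
  apply le_antisymm <;> rw [closure_le]
  · rintro t (rfl | rfl)
    exacts [h1, h2]
  · rintro t (rfl | rfl)
    exacts [h3, h4]

lemma exists_uv (h : ∀ x y : G, arrow x y ∨ arrow y x) (x y : G) :
    ∃ u v : G, closure ({u, v} : Set G) = closure ({x, y} : Set G) ∧
      ⁅u, v⁆ ∈ zpowers u ∧ ⁅u, v⁆ ∈ zpowers v := by
  suffices H : ∀ x y : G, arrow x y → ∃ u v : G,
      closure ({u, v} : Set G) = closure ({x, y} : Set G) ∧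
      ⁅u, v⁆ ∈ zpowers u ∧ ⁅u, v⁆ ∈ zpowers v by
    rcases h x y with hxy | hyx
    · exact H x y hxy
    · obtain ⟨u, v, e, h1, h2⟩ := H y x hyx
      exact ⟨u, v, by rw [e, Set.pair_comm], h1, h2⟩
  intro x y hxy
  have hxH : x ∈ closure ({x, y} : Set G) := subset_closure (Set.mem_insert _ _)
  have hyH : y ∈ closure ({x, y} : Set G) := subset_closure (Set.mem_insert_of_mem _ rfl)
  have hx_in1 : x ∈ closure ({y, x * y} : Set G) := by
    have h1 : x * y ∈ closure ({y, x * y} : Set G) :=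
      subset_closure (Set.mem_insert_of_mem _ rfl)
    have h2 : y ∈ closure ({y, x * y} : Set G) := subset_closure (Set.mem_insert _ _)
    have := mul_mem h1 (inv_mem h2)
    simpa using this
  rcases h y (x * y) with h1 | h1
  · refine ⟨x, y, rfl, ?_, ?_⟩
    · have hc := arrow_conj hxy hyH
      have e : ⁅x, y⁆ = ((y * x * y⁻¹) * x⁻¹)⁻¹ := by
        simp only [commutatorElement_def]; group
      rw [e]; exact inv_mem (mul_mem hc (inv_mem (mem_zpowers x)))
    · have hc := arrow_conj h1 hx_in1
      have e : ⁅x, y⁆ = (x * y * x⁻¹) * y⁻¹ := by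
        simp only [commutatorElement_def]
      rw [e]; exact mul_mem hc (inv_mem (mem_zpowers y))
  · -- h1 : arrow (x*y) y
    have EQ : closure ({x, x * y} : Set G) = closure ({x, y} : Set G) := by
      refine closure_pair hxH (mul_mem hxH hyH) (subset_closure (Set.mem_insert _ _)) ?_
      have h1' : x * y ∈ closure ({x, x * y} : Set G) :=
        subset_closure (Set.mem_insert_of_mem _ rfl)
      have h2' : x ∈ closure ({x, x * y} : Set G) := subset_closure (Set.mem_insert _ _)
      have := mul_mem (inv_mem h2') h1'
      simpa using this
    refine ⟨x, x * y, EQ, ?_, ?_⟩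
    · have hc := arrow_conj hxy (mul_mem hxH hyH)
      have e : ⁅x, x * y⁆ = x * ((x * y) * x * (x * y)⁻¹)⁻¹ := by
        simp only [commutatorElement_def]; group
      rw [e]; exact mul_mem (mem_zpowers x) (inv_mem hc)
    · have hx2 : x ∈ closure ({x * y, y} : Set G) := by
        have ha : x * y ∈ closure ({x * y, y} : Set G) := subset_closure (Set.mem_insert _ _)
        have hb : y ∈ closure ({x * y, y} : Set G) :=
          subset_closure (Set.mem_insert_of_mem _ rfl)
        have := mul_mem ha (inv_mem hb)
        simpa using this
      have hc := arrow_conj h1 hx2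
      have e : ⁅x, x * y⁆ = (x * (x * y) * x⁻¹) * (x * y)⁻¹ := by
        simp only [commutatorElement_def]
      rw [e]; exact mul_mem hc (inv_mem (mem_zpowers _))

lemma comm_zpowers {u v c : G}
    (hc : ∀ w ∈ closure ({u, v} : Set G), Commute c w)
    (hbase : ∀ s ∈ ({u, v} : Set G), ∀ t ∈ ({u, v} : Set G), ⁅s, t⁆ ∈ zpowers c) :
    ∀ g ∈ closure ({u, v} : Set G), ∀ k ∈ closure ({u, v} : Set G),
      ⁅g, k⁆ ∈ zpowers c := by
  have conjfix : ∀ w ∈ closure ({u, v} : Set G), ∀ p ∈ zpowers c,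
      w * p * w⁻¹ ∈ zpowers c := by
    intro w hw p hp
    obtain ⟨k, rfl⟩ := mem_zpowers_iff.mp hp
    have e : w * c ^ k * w⁻¹ = c ^ k := by
      rw [← ((hc w hw).zpow_left k).eq, mul_inv_cancel_right]
    rw [e]; exact zpow_mem (mem_zpowers c) k
  have inner : ∀ g ∈ closure ({u, v} : Set G),
      (∀ t ∈ ({u, v} : Set G), ⁅g, t⁆ ∈ zpowers c) →
      ∀ k ∈ closure ({u, v} : Set G), ⁅g, k⁆ ∈ zpowers c := by
    intro g hg hgbase k hk
    induction hk using closure_induction with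
    | mem t ht => exact hgbase t ht
    | one =>
      have e : ⁅g, (1 : G)⁆ = 1 := by simp only [commutatorElement_def]; group
      rw [e]; exact one_mem _
    | mul p q hp hq ihp ihq =>
      have e : ⁅g, p * q⁆ = ⁅g, p⁆ * (p * ⁅g, q⁆ * p⁻¹) := by
        simp only [commutatorElement_def]; group
      rw [e]; exact mul_mem ihp (conjfix p hp _ ihq)
    | inv p hp ihp =>
      have e : ⁅g, p⁻¹⁆ = p⁻¹ * ⁅g, p⁆⁻¹ * p := by
        simp only [commutatorElement_def]; group
      rw [e]; simpa using conjfix p⁻¹ (inv_mem hp) _ (inv_mem ihp)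
  intro g hg
  induction hg using closure_induction with
  | mem s hs => exact inner s (subset_closure hs) (hbase s hs)
  | one =>
    intro k hk
    have e : ⁅(1 : G), k⁆ = 1 := by simp only [commutatorElement_def]; group
    rw [e]; exact one_mem _
  | mul p q hp hq ihp ihq =>
    intro k hk
    have e : ⁅p * q, k⁆ = p * ⁅q, k⁆ * p⁻¹ * ⁅p, k⁆ := by
      simp only [commutatorElement_def]; group
    rw [e]; exact mul_mem (conjfix p hp _ (ihq k hk)) (ihp k hk)
  | inv p hp ihp =>
    intro k hk
    have e : ⁅p⁻¹, k⁆ = p⁻¹ * ⁅p, k⁆⁻¹ * p := by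
      simp only [commutatorElement_def]; group
    rw [e]; simpa using conjfix p⁻¹ (inv_mem hp) _ (inv_mem (ihp k hk))

lemma master (h : ∀ x y : G, arrow x y ∨ arrow y x) (x y : G) :
    ∀ g ∈ closure ({x, y} : Set G), ∀ k ∈ closure ({x, y} : Set G),
      ∀ w ∈ closure ({x, y} : Set G), Commute ⁅g, k⁆ w := by
  obtain ⟨u, v, EQ, h1, h2⟩ := exists_uv h x y
  have hcu : Commute ⁅u, v⁆ u := by
    obtain ⟨k, hk⟩ := mem_zpowers_iff.mp h1
    rw [← hk]; exact (Commute.refl u).zpow_left k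
  have hcv : Commute ⁅u, v⁆ v := by
    obtain ⟨k, hk⟩ := mem_zpowers_iff.mp h2
    rw [← hk]; exact (Commute.refl v).zpow_left k
  have hc : ∀ w ∈ closure ({u, v} : Set G), Commute ⁅u, v⁆ w := by
    intro w hw
    induction hw using closure_induction with
    | mem t ht => rcases ht with rfl | rfl; exacts [hcu, hcv]
    | one => exact Commute.one_right _
    | mul p q hp hq ihp ihq => exact ihp.mul_right ihq
    | inv p hp ihp => exact ihp.inv_right
  have self1 : ∀ a : G, ⁅a, a⁆ = (1 : G) := fun a => by
    simp only [commutatorElement_def]; group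
  have hbase : ∀ s ∈ ({u, v} : Set G), ∀ t ∈ ({u, v} : Set G),
      ⁅s, t⁆ ∈ zpowers ⁅u, v⁆ := by
    have b1 : ⁅u, u⁆ ∈ zpowers ⁅u, v⁆ := by rw [self1]; exact one_mem _
    have b2 : ⁅u, v⁆ ∈ zpowers ⁅u, v⁆ := mem_zpowers _
    have b3 : ⁅v, u⁆ ∈ zpowers ⁅u, v⁆ := by
      rw [← commutatorElement_inv u v]; exact inv_mem (mem_zpowers _)
    have b4 : ⁅v, v⁆ ∈ zpowers ⁅u, v⁆ := by rw [self1]; exact one_mem _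
    rintro s (rfl | rfl) t (rfl | rfl) <;> assumption
  have D := comm_zpowers hc hbase
  intro g hg k hk w hw
  rw [← EQ] at hg hk hw
  obtain ⟨m, hm⟩ := mem_zpowers_iff.mp (D g hg k hk)
  rw [← hm]; exact (hc w hw).zpow_left m

end Aux

section Levi
variable {G : Type*} [Group G]

lemma lev_inv (hk : ∀ a b : G, Commute ⁅a, b⁆ a) (t e : G) : ⁅t⁻¹, e⁆ = ⁅t, e⁆⁻¹ := by
  have h : ⁅t⁻¹, e⁆ = t⁻¹ * ⁅t, e⁆⁻¹ * t := by simp only [commutatorElement_def]; group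
  rw [h, mul_assoc, (hk t e).inv_left.eq, ← mul_assoc, inv_mul_cancel, one_mul]

lemma k1b (hk : ∀ a b : G, Commute ⁅a, b⁆ a) (a b : G) : Commute ⁅a, b⁆ b := by
  have := (hk b a).inv_left
  rwa [commutatorElement_inv] at this

lemma e2lem (hk : ∀ a b : G, Commute ⁅a, b⁆ a) (x y z : G) :
    Commute ⁅y, ⁅x, z⁆⁆ x := by
  have h1 : Commute (⁅x, y⁆ * (y * ⁅x, z⁆ * y⁻¹)) x := by
    have e1 : ⁅x, y * z⁆ = ⁅x, y⁆ * (y * ⁅x, z⁆ * y⁻¹) := by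
      simp only [commutatorElement_def]; group
    rw [← e1]; exact hk x (y * z)
  have h2 : Commute (y * ⁅x, z⁆ * y⁻¹) x := by
    have h2' := ((hk x y).inv_left).mul_left h1
    simpa only [inv_mul_cancel_left] using h2'
  have h3 : Commute (⁅y, ⁅x, z⁆⁆ * ⁅x, z⁆) x := by
    have e2' : y * ⁅x, z⁆ * y⁻¹ = ⁅y, ⁅x, z⁆⁆ * ⁅x, z⁆ := by
      simp only [commutatorElement_def]; group
    rwa [e2'] at h2
  have h4 := h3.mul_left ((hk x z).inv_left)
  simpa only [mul_inv_cancel_right] using h4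

lemma t_fst (hk : ∀ a b : G, Commute ⁅a, b⁆ a) (x y z : G) :
    Commute ⁅⁅x, y⁆, z⁆ x := by
  have h := e2lem hk x z y
  rw [← commutatorElement_inv ⁅x, y⁆ z] at h
  simpa only [inv_inv] using h.inv_left

lemma lemAS (hk : ∀ a b : G, Commute ⁅a, b⁆ a) (x y z : G) :
    ⁅⁅y, x⁆, z⁆ = ⁅⁅x, y⁆, z⁆⁻¹ := by
  rw [← commutatorElement_inv x y, lev_inv hk]

lemma lemAS2 (hk : ∀ a b : G, Commute ⁅a, b⁆ a) (x y z : G) :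
    ⁅⁅x, z⁆, y⁆ = ⁅⁅x, y⁆, z⁆⁻¹ := by
  set P := ⁅x, y⁆ with hP
  set Q := ⁅x, z⁆ with hQ
  have c1 : P * y = y * P := (k1b hk x y).eq
  have c2 : Q * z = z * Q := (k1b hk x z).eq
  have c3 : Commute ⁅P, z⁆ z := k1b hk P z
  have c4 : Commute ⁅P, z⁆ P := hk P z
  have h0 : P * (y * (Q * (y⁻¹ * (y * z)))) = y * (z * (P * (y * (Q * y⁻¹)))) := by
    have hcm := (k1b hk x (y * z)).eq
    have e1 : ⁅x, y * z⁆ = P * (y * Q * y⁻¹) := by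
      rw [hP, hQ]; simp only [commutatorElement_def]; group
    rw [e1] at hcm
    simpa only [mul_assoc] using hcm
  rw [inv_mul_cancel_left] at h0
  rw [c2] at h0
  rw [← mul_assoc P y, c1, mul_assoc] at h0
  have h1 := mul_left_cancel h0
  have h2 : P * (z * (Q * y)) = z * (P * (y * Q)) := by
    have := congrArg (· * y) h1
    simp only [mul_assoc] at this
    simpa only [inv_mul_cancel, mul_one] using this
  have dP : ∀ w : G, P * (z * w) = ⁅P, z⁆ * (z * (P * w)) := by
    intro w; simp only [commutatorElement_def]; group
  have dQ : Q * y = ⁅Q, y⁆ * (y * Q) := by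
    simp only [commutatorElement_def]; group
  rw [dQ, dP] at h2
  rw [← mul_assoc ⁅P, z⁆ z, c3.eq, mul_assoc] at h2
  have h3 := mul_left_cancel h2
  rw [← mul_assoc ⁅P, z⁆ P, c4.eq, mul_assoc] at h3
  have h4 := mul_left_cancel h3
  have h5 : ⁅P, z⁆ * ⁅Q, y⁆ = 1 := by
    have := congrArg (· * (y * Q)⁻¹) h4
    simpa [mul_assoc] using this
  exact (inv_eq_of_mul_eq_one_right h5).symm

lemma lemCY (hk : ∀ a b : G, Commute ⁅a, b⁆ a) (x y z : G) :
    ⁅⁅x, y⁆, z⁆ = ⁅⁅z, x⁆, y⁆ := by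
  rw [lemAS hk x z y, lemAS2 hk x y z, inv_inv]

lemma conj_of_commute {X g : G} (h : Commute X g) : g * X * g⁻¹ = X := by
  rw [← h.eq, mul_inv_cancel_right]

lemma cube (hk : ∀ a b : G, Commute ⁅a, b⁆ a) (a b c : G) : ⁅⁅a, b⁆, c⁆ ^ 3 = 1 := by
  have hw : (b * ⁅⁅b⁻¹, a⁆, c⁆ * b⁻¹) * (c * ⁅⁅c⁻¹, b⁆, a⁆ * c⁻¹) *
      (a * ⁅⁅a⁻¹, c⁆, b⁆ * a⁻¹) = 1 := by
    simp only [commutatorElement_def]; group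
  rw [lev_inv hk b a, lev_inv hk ⁅b, a⁆ c] at hw
  rw [lev_inv hk c b, lev_inv hk ⁅c, b⁆ a] at hw
  rw [lev_inv hk a c, lev_inv hk ⁅a, c⁆ b] at hw
  rw [conj_of_commute (t_fst hk b a c).inv_left] at hw
  rw [conj_of_commute (t_fst hk c b a).inv_left] at hw
  rw [conj_of_commute (t_fst hk a c b).inv_left] at hw
  rw [lemAS hk a b c] at hw
  have e2 : ⁅⁅c, b⁆, a⁆ = ⁅⁅a, b⁆, c⁆⁻¹ := by
    rw [lemAS hk b c a, lemCY hk b c a]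
  rw [e2] at hw
  rw [lemAS2 hk a b c] at hw
  simp only [inv_inv] at hw
  have e3 : ⁅⁅a, b⁆, c⁆ ^ 3 = ⁅⁅a, b⁆, c⁆ * ⁅⁅a, b⁆, c⁆ * ⁅⁅a, b⁆, c⁆ := by
    rw [pow_succ, pow_succ, pow_one]
  rw [e3]; exact hw

lemma levi (hk : ∀ a b : G, Commute ⁅a, b⁆ a) (x y z d : G) :
    ⁅⁅⁅x, y⁆, z⁆, d⁆ = 1 := by
  have r12 : ∀ a b c e : G, ⁅⁅⁅b, a⁆, c⁆, e⁆ = ⁅⁅⁅a, b⁆, c⁆, e⁆⁻¹ := fun a b c e => by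
    rw [lemAS hk a b c, lev_inv hk]
  have r23 : ∀ a b c e : G, ⁅⁅⁅a, c⁆, b⁆, e⁆ = ⁅⁅⁅a, b⁆, c⁆, e⁆⁻¹ := fun a b c e => by
    rw [lemAS2 hk a b c, lev_inv hk]
  have r34 : ∀ a b c e : G, ⁅⁅⁅a, b⁆, e⁆, c⁆ = ⁅⁅⁅a, b⁆, c⁆, e⁆⁻¹ := fun a b c e => by
    rw [lemCY hk ⁅a, b⁆ e c, ← commutatorElement_inv ⁅a, b⁆ c, lev_inv hk]
  have r2 : ⁅⁅⁅x, y⁆, z⁆, d⁆ = ⁅⁅⁅z, d⁆, x⁆, y⁆⁻¹ := by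
    rw [lemCY hk ⁅x, y⁆ z d, lemCY hk d ⁅x, y⁆ z]
    rw [lemCY hk ⁅z, d⁆ x y, lemCY hk y ⁅z, d⁆ x]
    rw [commutatorElement_inv ⁅x, y⁆ ⁅z, d⁆]
  have hflip : ⁅⁅⁅z, d⁆, x⁆, y⁆ = ⁅⁅⁅x, y⁆, z⁆, d⁆ := by
    rw [r23 z x d y, r34 z x y d, r12 x z y d, r23 x y z d, inv_inv, inv_inv]
  have key : ⁅⁅⁅x, y⁆, z⁆, d⁆ = ⁅⁅⁅x, y⁆, z⁆, d⁆⁻¹ := by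
    conv_lhs => rw [r2]
    rw [hflip]
  have h2 : ⁅⁅⁅x, y⁆, z⁆, d⁆ * ⁅⁅⁅x, y⁆, z⁆, d⁆ = 1 := by
    rw [mul_eq_one_iff_eq_inv]; exact key
  have h3 : ⁅⁅⁅x, y⁆, z⁆, d⁆ ^ 3 = 1 := cube hk ⁅x, y⁆ z d
  have e : ⁅⁅⁅x, y⁆, z⁆, d⁆ =
      ⁅⁅⁅x, y⁆, z⁆, d⁆ ^ 3 * (⁅⁅⁅x, y⁆, z⁆, d⁆ * ⁅⁅⁅x, y⁆, z⁆, d⁆)⁻¹ := by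
    rw [pow_succ, pow_succ, pow_one]; group
  rw [e, h2, h3, inv_one, mul_one]

end Levi

theorem stmt15 {G : Type*} [Group G] [Finite G]
    (h : ∀ x y : G, arrow x y ∨ arrow y x) :
    (∀ x y : G, upperCentralSeries (↥(Subgroup.closure {x, y})) 2 = ⊤) ∧
      upperCentralSeries G 3 = ⊤ := by
  unfold _root_.upperCentralSeries
  have hk : ∀ a b : G, Commute ⁅a, b⁆ a := by
    intro a b
    have ha : a ∈ closure ({a, b} : Set G) := subset_closure (Set.mem_insert _ _)
    have hb : b ∈ closure ({a, b} : Set G) := subset_closure (Set.mem_insert_of_mem _ rfl)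
    exact master h a b a ha b hb a ha
  constructor
  · intro x y
    rw [eq_top_iff']
    intro a
    have e2 : (2 : ℕ) = 1 + 1 := rfl
    rw [e2, mem_upperCentralSeries_succ_iff]
    intro b
    rw [upperCentralSeries_one, Subgroup.mem_center_iff]
    intro k
    have hcom := (master h x y (↑a) a.2 (↑b) b.2 (↑k) k.2).symm.eq
    refine Subtype.ext ?_
    push_cast
    simp only [commutatorElement_def] at hcom
    simp only [mul_assoc] at hcom ⊢
    simpa only [commutatorElement_def, Subgroup.coe_mul, Subgroup.coe_inv, mul_assoc] using hcom
  · rw [eq_top_iff']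
    intro g
    have e3 : (3 : ℕ) = 2 + 1 := rfl
    rw [e3, mem_upperCentralSeries_succ_iff]
    intro p
    have e2 : (2 : ℕ) = 1 + 1 := rfl
    rw [e2, mem_upperCentralSeries_succ_iff]
    intro q
    have e1 : (1 : ℕ) = 0 + 1 := rfl
    rw [e1, mem_upperCentralSeries_succ_iff]
    intro r
    rw [upperCentralSeries_zero, Subgroup.mem_bot]
    have hl := levi hk g p q r
    simp only [commutatorElement_def] at hl
    exact hl
end

section
/- Let G be a group and x ∈ G \ Univ⁺(G). If for every y ∈ G \ Univ⁺(G) there exists c ∈ C_G(x) with c⁻¹y ∈ Univ⁺(G), then ⟨x⟩ is normal in G. -/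
theorem stmt16 {G : Type*} [Group G] {x : G} (hx : ¬ isUnivP x)
    (h : ∀ y : G, ¬ isUnivP y → ∃ c ∈ Subgroup.centralizer {x}, isUnivP (c⁻¹ * y)) :
    (Subgroup.zpowers x).Normal := by
  have key : ∀ y : G, arrow x y → ∀ n ∈ Subgroup.zpowers x, y * n * y⁻¹ ∈ Subgroup.zpowers x := by
    intro y hyx n hn
    have hxH : x ∈ Subgroup.closure {x, y} :=
      Subgroup.subset_closure (Set.mem_insert x {y})
    have hyH : y ∈ Subgroup.closure {x, y} :=
      Subgroup.subset_closure (Set.mem_insert_of_mem x rfl)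
    have hnH : n ∈ Subgroup.closure {x, y} :=
      (Subgroup.zpowers_le.2 hxH) hn
    have := hyx.conj_mem ⟨n, hnH⟩ (by simpa [Subgroup.mem_subgroupOf] using hn) ⟨y, hyH⟩
    simpa [Subgroup.mem_subgroupOf] using this
  constructor
  intro n hn g
  by_cases hg : isUnivP g
  · exact key g (hg x) n hn
  · obtain ⟨c, hc, hu⟩ := h g hg
    have h1 : (c⁻¹ * g) * n * (c⁻¹ * g)⁻¹ ∈ Subgroup.zpowers x := key _ (hu x) n hn
    obtain ⟨k, hk⟩ := h1
    have hcx : Commute c x := (Subgroup.mem_centralizer_iff.1 hc x rfl).symm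
    have : g * n * g⁻¹ = c * ((c⁻¹ * g) * n * (c⁻¹ * g)⁻¹) * c⁻¹ := by group
    rw [this, ← hk]
    have : c * x ^ k * c⁻¹ = x ^ k := by
      rw [(hcx.zpow_right k).eq]
      group
    rw [this]
    exact ⟨k, rfl⟩
end

section
/- If Univ⁺(G) has prime index in a group G, then for all x, y ∈ G, either ⟨x⟩ ⊴ ⟨x,y⟩ or ⟨y⟩ ⊴ ⟨x,y⟩ (i.e. the undirected normalizing graph of G is complete). -/
/-- If `⟨x,y⟩` lies inside the normalizer of `⟨x⟩`, then `⟨x⟩ ⊴ ⟨x,y⟩`. -/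
lemma arrow_aux {G : Type*} [Group G] {x y : G}
    (hle : Subgroup.closure {x, y} ≤ Subgroup.normalizer ((Subgroup.zpowers x : Subgroup G) : Set G)) :
    arrow x y := by
  constructor
  intro n hn g
  have hg := hle g.2
  rw [Subgroup.mem_normalizer_iff] at hg
  simp only [Subgroup.mem_subgroupOf] at hn ⊢
  exact (hg (n : G)).mp hn

theorem stmt17 {G : Type*} [Group G]
    (h : (⨅ a : G, Subgroup.normalizer ((Subgroup.zpowers a : Subgroup G) : Set G)).index.Prime) :
    ∀ x y : G, arrow x y ∨ arrow y x := by
  intro x y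
  set N : Subgroup G := ⨅ a : G, Subgroup.normalizer ((Subgroup.zpowers a : Subgroup G) : Set G) with hN
  by_cases hx : x ∈ N
  · right
    apply arrow_aux
    rw [Subgroup.closure_le]
    rintro z (rfl | rfl)
    · exact Subgroup.le_normalizer (Subgroup.mem_zpowers z)
    · exact iInf_le (fun a => Subgroup.normalizer ((Subgroup.zpowers a : Subgroup G) : Set G)) y hx
  · left
    set K : Subgroup G := N ⊔ Subgroup.zpowers x with hK
    have hNK : N ≤ K := le_sup_left
    have hmul := Subgroup.relIndex_mul_index hNK
    have hdvd : K.index ∣ N.index := ⟨_, by rw [← hmul, mul_comm]⟩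
    rcases (Nat.Prime.eq_one_or_self_of_dvd h _ hdvd) with h1 | h2
    · have hKtop : K = ⊤ := Subgroup.index_eq_one.mp h1
      apply arrow_aux
      have hKle : K ≤ Subgroup.normalizer ((Subgroup.zpowers x : Subgroup G) : Set G) := by
        apply sup_le
        · exact iInf_le _ x
        · exact Subgroup.le_normalizer
      rw [Subgroup.closure_le]
      rintro z (rfl | rfl)
      · exact Subgroup.le_normalizer (Subgroup.mem_zpowers z)
      · exact hKle (hKtop ▸ Subgroup.mem_top z)
    · exfalso
      have hne : N.index ≠ 0 := h.ne_zero
      have : N.relIndex K = 1 := by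
        have := hmul
        rw [h2] at this
        nlinarith [Nat.pos_of_ne_zero (h2 ▸ hne : K.index ≠ 0), this]
      have hKN : K ≤ N := Subgroup.relIndex_eq_one.mp this
      exact hx (hKN (le_sup_right (α := Subgroup G) (Subgroup.mem_zpowers x)))
end

section
/- Let G = KH be a finite group where K ⊴ G is nilpotent and H is cyclic. If there exist a prime p dividing |H| and a prime r dividing |K| with p ∣ r − 1, then there exist nontrivial elements k ∈ Z(K) and h ∈ H such that h normalizes ⟨k⟩ (i.e. ⟨k⟩ ⊴ ⟨k,h⟩). -/
open Polynomial in
/-- If a polynomial splits, evaluating it at an endomorphism gives a non-injective map only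
if the endomorphism has an eigenvector. -/
lemma exists_eigenvector_aux {F M : Type*} [Field F] [AddCommGroup M] [Module F M]
    (σ : Module.End F M) (n : ℕ) :
    ∀ q : F[X], q.natDegree ≤ n → q ≠ 0 → q.Splits →
      ¬ Function.Injective (Polynomial.aeval σ q) →
      ∃ (c : F) (v : M), v ≠ 0 ∧ σ v = c • v := by
  have const_case : ∀ q : F[X], q ≠ 0 → q.natDegree = 0 →
      Function.Injective (Polynomial.aeval σ q) := by
    intro q hq h0
    have hC : q = C (q.coeff 0) := eq_C_of_natDegree_eq_zero h0
    have ha : q.coeff 0 ≠ 0 := fun h => hq (by rw [hC, h, map_zero])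
    intro a b hab
    rw [hC, aeval_C] at hab
    simp only [Module.algebraMap_end_apply] at hab
    exact smul_right_injective M ha hab
  induction n with
  | zero =>
    intro q hdeg hq _ hinj
    exact absurd (const_case q hq (Nat.le_zero.mp hdeg)) hinj
  | succ n ih =>
    intro q hdeg hq hsp hinj
    by_cases h0 : q.natDegree = 0
    · exact absurd (const_case q hq h0) hinj
    · have hd : q.degree ≠ 0 := by
        rw [degree_eq_natDegree hq]
        exact_mod_cast h0
      obtain ⟨c, hc⟩ := hsp.exists_eval_eq_zero hd
      have hroot : IsRoot q c := hc
      obtain ⟨q₁, hq₁⟩ := (dvd_iff_isRoot).mpr hroot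
      have hq₁0 : q₁ ≠ 0 := fun h => hq (by rw [hq₁, h, mul_zero])
      have hdeg₁ : q₁.natDegree ≤ n := by
        have h1 : q.natDegree = 1 + q₁.natDegree := by
          rw [hq₁, natDegree_mul (X_sub_C_ne_zero c) hq₁0, natDegree_X_sub_C]
        omega
      have hsp₁ : q₁.Splits :=
        Splits.of_dvd hsp hq ⟨X - C c, by rw [hq₁, mul_comm]⟩
      have hmul : (Polynomial.aeval σ) q =
          (Polynomial.aeval σ) (X - C c) * (Polynomial.aeval σ) q₁ := by
        rw [hq₁, map_mul]
      by_cases hinj1 : Function.Injective ((Polynomial.aeval σ) (X - C c))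
      · refine ih q₁ hdeg₁ hq₁0 hsp₁ fun hinj2 => hinj ?_
        rw [hmul]
        intro a b hab
        rw [Module.End.mul_apply, Module.End.mul_apply] at hab
        exact hinj2 (hinj1 hab)
      · rw [Function.not_injective_iff] at hinj1
        obtain ⟨a, b, hab, hne⟩ := hinj1
        refine ⟨c, a - b, sub_ne_zero.mpr hne, ?_⟩
        have h2 : (Polynomial.aeval σ) (X - C c) (a - b) = 0 := by
          rw [map_sub (Polynomial.aeval σ (X - C c)), hab, sub_self]
        have he : (Polynomial.aeval σ) (X - C c) = σ - algebraMap F (Module.End F M) c := by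
          rw [map_sub, aeval_X, aeval_C]
        rw [he] at h2
        simp only [LinearMap.sub_apply, Module.algebraMap_end_apply] at h2
        have h3 : σ (a - b) = c • (a - b) := by
          have := sub_eq_zero.mp h2
          exact this
        rw [map_sub, smul_sub] at h3 ⊢
        exact h3

/-- A nontrivial normal subgroup of a nilpotent group meets the center nontrivially. -/
lemma inf_center_ne_bot_aux {K : Type*} [Group K] [Group.IsNilpotent K]
    (N : Subgroup K) [hNn : N.Normal] (hN : N ≠ ⊥) : N ⊓ Subgroup.center K ≠ ⊥ := by
  obtain ⟨n, hn⟩ := Group.IsNilpotent.nilpotent' (G := K)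
  have key : ∀ i, N ⊓ Subgroup.upperCentralSeries K i ≠ ⊥ → N ⊓ Subgroup.center K ≠ ⊥ := by
    intro i
    induction i with
    | zero =>
      intro hi
      exact absurd (by simp [Subgroup.upperCentralSeries_zero]) hi
    | succ i ih =>
      intro hi
      by_cases hii : N ⊓ Subgroup.upperCentralSeries K i = ⊥
      · obtain ⟨x, hx1⟩ := Subgroup.ne_bot_iff_exists_ne_one.mp hi
        have hxN : (x : K) ∈ N := x.2.1
        have hxU : (x : K) ∈ Subgroup.upperCentralSeries K (i + 1) := x.2.2
        have hxc : (x : K) ∈ Subgroup.center K := by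
          rw [Subgroup.mem_center_iff]
          intro g
          have hcom : (x : K) * g * (x : K)⁻¹ * g⁻¹ ∈ Subgroup.upperCentralSeries K i :=
            (Subgroup.mem_upperCentralSeries_succ_iff).mp hxU g
          have hcomN : (x : K) * g * (x : K)⁻¹ * g⁻¹ ∈ N := by
            have h1 : g * (x : K)⁻¹ * g⁻¹ ∈ N := hNn.conj_mem _ (N.inv_mem hxN) g
            have h2 : (x : K) * (g * (x : K)⁻¹ * g⁻¹) ∈ N := N.mul_mem hxN h1
            simpa [mul_assoc] using h2
          have hbot : (x : K) * g * (x : K)⁻¹ * g⁻¹ ∈ (⊥ : Subgroup K) := by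
            rw [← hii]; exact ⟨hcomN, hcom⟩
          rw [Subgroup.mem_bot] at hbot
          have : (x : K) * g = g * (x : K) := by
            have h3 : ((x : K) * g) * ((g : K) * (x : K))⁻¹ = 1 := by
              simpa [mul_inv_rev, mul_assoc] using hbot
            exact mul_inv_eq_one.mp h3
          exact this.symm
        intro hbot
        have : (x : K) ∈ (⊥ : Subgroup K) := by rw [← hbot]; exact ⟨hxN, hxc⟩
        rw [Subgroup.mem_bot] at this
        exact hx1 (Subtype.ext this)
      · exact ih hii
  apply key n
  rw [hn]
  simpa using hN


open Polynomial in
/-- Multiplicative eigenvector lemma: a `p`-power automorphism of an elementary abelian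
`r`-group (with `p ∣ r - 1`) normalizes some nontrivial cyclic subgroup. -/
lemma exists_mul_eigenvector {Vt : Type*} [CommGroup Vt] (r p : ℕ) (hr : r.Prime)
    (hp : p.Prime) (hdvd : p ∣ r - 1) [Module (ZMod r) (Additive Vt)]
    (σ₀ : MulAut Vt) (hσ₀p : σ₀ ^ p = 1) (x₀ : Vt) (hx₀ : x₀ ≠ 1) :
    ∃ (m : ℕ) (x : Vt), x ≠ 1 ∧ σ₀ x = x ^ m := by
  haveI : NeZero r := ⟨hr.ne_zero⟩
  set σ : Additive Vt →ₗ[ZMod r] Additive Vt :=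
    AddMonoidHom.toZModLinearMap r (MonoidHom.toAdditive σ₀.toMonoidHom) with hσdef
  have hσapp : ∀ v : Additive Vt, σ v = Additive.ofMul (σ₀ v.toMul) := fun _ => rfl
  have hpow : ∀ (n : ℕ) (v : Additive Vt),
      (σ ^ n) v = Additive.ofMul ((σ₀ ^ n) v.toMul) := by
    intro n
    induction n with
    | zero => intro v; rw [pow_zero, pow_zero]; rfl
    | succ n ihn =>
      intro v
      rw [pow_succ, pow_succ, Module.End.mul_apply, MulAut.mul_apply, ihn]
      rfl
  have hσp : σ ^ p = 1 := by
    apply LinearMap.ext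
    intro v
    rw [hpow p v, hσ₀p]
    rfl
  have haeval : (Polynomial.aeval σ) (X ^ p - 1 : (ZMod r)[X]) = 0 := by
    rw [map_sub, map_pow, aeval_X, map_one, hσp, sub_self]
  -- a primitive p-th root of unity in ZMod r
  haveI : Fact r.Prime := ⟨hr⟩
  haveI : Fact p.Prime := ⟨hp⟩
  have hcardu : Nat.card (ZMod r)ˣ = r - 1 := by
    rw [Nat.card_eq_fintype_card, ZMod.card_units_eq_totient, Nat.totient_prime hr]
  obtain ⟨u, hu⟩ := exists_prime_orderOf_dvd_card' (G := (ZMod r)ˣ) p (by rw [hcardu]; exact hdvd)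
  have hprim : IsPrimitiveRoot ((u : ZMod r)) p :=
    IsPrimitiveRoot.coe_units_iff.mpr (hu ▸ IsPrimitiveRoot.orderOf u)
  have hsplits : (X ^ p - 1 : (ZMod r)[X]).Splits := by
    rw [X_pow_sub_one_eq_prod hp.pos hprim]
    exact Splits.prod (fun ζ _ => Splits.X_sub_C _)
  have hqne : (X ^ p - 1 : (ZMod r)[X]) ≠ 0 := by
    have := X_pow_sub_C_ne_zero hp.pos (1 : ZMod r)
    rwa [map_one] at this
  -- nontrivial element of the module
  have hv₀ne : Additive.ofMul x₀ ≠ 0 := by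
    intro e
    rw [ofMul_eq_zero] at e
    exact hx₀ e
  have h0 : ¬ Function.Injective ((Polynomial.aeval σ) (X ^ p - 1 : (ZMod r)[X])) := by
    rw [haeval]
    intro hinj
    exact hv₀ne (hinj (by simp))
  obtain ⟨c, v, hv0, hσv⟩ :=
    exists_eigenvector_aux σ (X ^ p - 1 : (ZMod r)[X]).natDegree
      (X ^ p - 1) le_rfl hqne hsplits h0
  have hcval : ((c.val : ℕ) : ZMod r) = c := ZMod.natCast_rightInverse c
  refine ⟨c.val, v.toMul, ?_, ?_⟩
  · intro e
    apply hv0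
    show v = 0
    rw [show v = Additive.ofMul v.toMul from rfl, e]
    rfl
  · have h1 : Additive.ofMul (σ₀ v.toMul) = c • v := by rw [← hσv]; exact (hσapp v).symm
    have h2 : c • v = (c.val : ℕ) • v := by
      conv_lhs => rw [← hcval]
      rw [Nat.cast_smul_eq_nsmul]
    have h3 : (c.val : ℕ) • v = Additive.ofMul (v.toMul ^ c.val) :=
      (ofMul_pow c.val v.toMul).symm
    exact h1.trans (h2.trans h3)

open Subgroup Polynomial in
theorem stmt19 {G : Type*} [Group G] [Finite G] (K H : Subgroup G)
    [K.Normal] [Group.IsNilpotent ↥K] [IsCyclic ↥H]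
    (hKH : ∀ g : G, ∃ k ∈ K, ∃ h ∈ H, g = k * h)
    (p r : ℕ) (hp : p.Prime) (hr : r.Prime)
    (hpH : p ∣ Nat.card ↥H) (hrK : r ∣ Nat.card ↥K) (hdvd : p ∣ r - 1) :
    ∃ k : ↥K, k ∈ Subgroup.center ↥K ∧ (k : G) ≠ 1 ∧
      ∃ h ∈ H, h ≠ 1 ∧ arrow (k : G) h := by
  classical
  haveI : Fact p.Prime := ⟨hp⟩
  haveI : Fact r.Prime := ⟨hr⟩
  haveI : NeZero r := ⟨hr.ne_zero⟩
  -- an element of order p in H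
  obtain ⟨h', hh'⟩ := exists_prime_orderOf_dvd_card' (G := ↥H) p hpH
  set h : G := (h' : G) with hhdef
  have horder : orderOf h = p := by rw [hhdef, orderOf_coe]; exact hh'
  have hne1 : h ≠ 1 := by
    intro e
    rw [e, orderOf_one] at horder
    exact hp.ne_one horder.symm
  -- a central element of order r in K
  obtain ⟨g0, hg0⟩ := exists_prime_orderOf_dvd_card' (G := ↥K) r hrK
  have hg0p : IsPGroup r (Subgroup.zpowers g0) := by
    apply IsPGroup.of_card
    rw [Nat.card_zpowers, hg0, pow_one]
  obtain ⟨P, hP⟩ := hg0p.exists_le_sylow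
  have htfae := ((isNilpotent_of_finite_tfae (G := ↥K)).out 0 3).mp
    (inferInstance : Group.IsNilpotent ↥K)
  haveI hPnormal : (P : Subgroup ↥K).Normal := htfae r (⟨hr⟩ : Fact r.Prime) P
  have hPbot : (P : Subgroup ↥K) ≠ ⊥ := by
    intro e
    have hmem := hP (Subgroup.mem_zpowers g0)
    rw [e, Subgroup.mem_bot] at hmem
    rw [hmem, orderOf_one] at hg0
    exact hr.ne_one hg0.symm
  have hT := inf_center_ne_bot_aux (K := ↥K) P hPbot
  set T : Subgroup ↥K := (P : Subgroup ↥K) ⊓ Subgroup.center ↥K with hTdef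
  have hTp : IsPGroup r ↥T := P.2.to_le inf_le_left
  have hrT : r ∣ Nat.card ↥T := by
    obtain ⟨m, hm⟩ := IsPGroup.iff_card.mp hTp
    rcases Nat.eq_zero_or_pos m with h0 | h1
    · exfalso
      rw [h0, pow_zero] at hm
      exact hT (Subgroup.eq_bot_of_card_eq T hm)
    · rw [hm]
      exact dvd_pow_self r h1.ne'
  obtain ⟨z, hz⟩ := exists_prime_orderOf_dvd_card' (G := ↥T) r hrT
  have hzK : orderOf ((z : ↥K) : ↥K) = r := by rw [orderOf_coe]; exact hz
  have hzcent : (z : ↥K) ∈ Subgroup.center ↥K := z.2.2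
  -- W : the image of the center of K in G
  set W : Subgroup G := Subgroup.map K.subtype (Subgroup.center ↥K) with hWdef
  have hWmem : ∀ x : G, x ∈ W ↔ ∃ y : ↥K, y ∈ Subgroup.center ↥K ∧ (y : G) = x := by
    intro x
    rw [hWdef, Subgroup.mem_map]
    rfl
  have hWcomm : ∀ a ∈ W, ∀ b ∈ W, a * b = b * a := by
    intro a ha b hb
    obtain ⟨ya, hya, rfl⟩ := (hWmem a).mp ha
    obtain ⟨yb, hyb, rfl⟩ := (hWmem b).mp hb
    have := Subgroup.mem_center_iff.mp hya yb
    calc (ya : G) * yb = ((ya * yb : ↥K) : G) := rfl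
      _ = ((yb * ya : ↥K) : G) := by rw [this]
      _ = (yb : G) * ya := rfl
  have hWconj : ∀ (g w : G), w ∈ W → g * w * g⁻¹ ∈ W := by
    intro g w hw
    obtain ⟨y, hy, rfl⟩ := (hWmem w).mp hw
    have hgK : g * (y : G) * g⁻¹ ∈ K := Subgroup.Normal.conj_mem ‹K.Normal› _ y.2 g
    refine (hWmem _).mpr ⟨⟨g * (y : G) * g⁻¹, hgK⟩, ?_, rfl⟩
    rw [Subgroup.mem_center_iff]
    intro k
    apply Subtype.ext
    show (k : G) * (g * (y : G) * g⁻¹) = (g * (y : G) * g⁻¹) * (k : G)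
    have hk' : g⁻¹ * (k : G) * g ∈ K := by
      simpa using Subgroup.Normal.conj_mem ‹K.Normal› _ k.2 g⁻¹
    have hcy : (g⁻¹ * (k : G) * g) * (y : G) = (y : G) * (g⁻¹ * (k : G) * g) := by
      have h5 := Subgroup.mem_center_iff.mp hy ⟨_, hk'⟩
      calc (g⁻¹ * (k : G) * g) * (y : G) = (((⟨_, hk'⟩ : ↥K) * y : ↥K) : G) := rfl
        _ = ((y * (⟨_, hk'⟩ : ↥K) : ↥K) : G) := by rw [h5]
        _ = (y : G) * (g⁻¹ * (k : G) * g) := rfl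
    have hstep : (k : G) * (g * (y : G) * g⁻¹) = g * ((g⁻¹ * (k : G) * g) * (y : G)) * g⁻¹ := by
      group
    rw [hstep, hcy]
    group
  -- V : the r-torsion of W
  set V : Subgroup G :=
    { carrier := {x | x ∈ W ∧ x ^ r = 1}
      one_mem' := ⟨W.one_mem, one_pow r⟩
      mul_mem' := by
        rintro a b ⟨haW, har⟩ ⟨hbW, hbr⟩
        refine ⟨W.mul_mem haW hbW, ?_⟩
        rw [(show Commute a b from hWcomm a haW b hbW).mul_pow, har, hbr, mul_one]
      inv_mem' := by
        rintro a ⟨haW, har⟩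
        exact ⟨W.inv_mem haW, by rw [inv_pow, har, inv_one]⟩ } with hVdef
  have hVmem : ∀ x : G, x ∈ V ↔ x ∈ W ∧ x ^ r = 1 := fun _ => Iff.rfl
  haveI hVnormal : V.Normal := by
    constructor
    intro v hv g
    refine (hVmem _).mpr ⟨hWconj g v ((hVmem v).mp hv).1, ?_⟩
    rw [conj_pow, ((hVmem v).mp hv).2, mul_one, mul_inv_cancel]
  -- the base point: z gives a nontrivial element of V
  have hz0W : ((z : ↥K) : G) ∈ W := (hWmem _).mpr ⟨(z : ↥K), hzcent, rfl⟩
  have hz0ord : orderOf ((z : ↥K) : G) = r := by rw [orderOf_coe]; exact hzK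
  have hz0V : ((z : ↥K) : G) ∈ V := by
    refine (hVmem _).mpr ⟨hz0W, ?_⟩
    rw [← hz0ord]
    exact pow_orderOf_eq_one _
  have hz0ne : ((z : ↥K) : G) ≠ 1 := by
    intro e
    rw [e, orderOf_one] at hz0ord
    exact hr.ne_one hz0ord.symm
  -- V is a commutative group; make Additive V a ZMod r module
  letI : CommGroup ↥V :=
    { (inferInstance : Group ↥V) with
      mul_comm := fun a b =>
        Subtype.ext (hWcomm (a : G) ((hVmem _).mp a.2).1 (b : G) ((hVmem _).mp b.2).1) }
  letI : Module (ZMod r) (Additive ↥V) := AddCommGroup.zmodModule (n := r) (by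
    intro x
    have hx : x.toMul ^ r = 1 := by
      apply Subtype.ext
      rw [SubgroupClass.coe_pow]
      exact ((hVmem _).mp x.toMul.2).2
    calc r • x = r • Additive.ofMul x.toMul := rfl
      _ = Additive.ofMul (x.toMul ^ r) := (ofMul_pow r x.toMul).symm
      _ = 0 := by rw [hx]; rfl)
  -- conjugation by h as an automorphism of V, and its eigenvector
  set σ₀ : MulAut ↥V := MulAut.conjNormal h with hσ₀def
  have hσ₀p : σ₀ ^ p = 1 := by
    rw [hσ₀def, ← map_pow, ← horder, pow_orderOf_eq_one, map_one]
  obtain ⟨m, x, hxne1, heig⟩ :=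
    exists_mul_eigenvector (Vt := ↥V) r p hr hp hdvd σ₀ hσ₀p
      (⟨_, hz0V⟩ : ↥V) (fun e => hz0ne (congrArg Subtype.val e))
  have hxne : (x : G) ≠ 1 := fun e => hxne1 (Subtype.ext e)
  have hconj : h * (x : G) * h⁻¹ = (x : G) ^ m := by
    have := congrArg Subtype.val heig
    rw [SubgroupClass.coe_pow] at this
    rw [← this, hσ₀def]
    exact (MulAut.conjNormal_apply h x).symm
  -- h normalizes ⟨x⟩
  set S : Subgroup G := Subgroup.zpowers (x : G) with hSdef
  have hmapS : Subgroup.map ((MulAut.conj h) : G →* G) S = S := by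
    have hle : Subgroup.map ((MulAut.conj h) : G →* G) S ≤ S := by
      rw [hSdef, MonoidHom.map_zpowers]
      apply Subgroup.zpowers_le.mpr
      have : ((MulAut.conj h) : G →* G) (x : G) = (x : G) ^ m := by
        simpa [MulAut.conj_apply] using hconj
      rw [this]
      exact Subgroup.pow_mem _ (Subgroup.mem_zpowers _) _
    apply Subgroup.eq_of_le_of_card_ge hle
    have : Nat.card ↥S = Nat.card ↥(Subgroup.map ((MulAut.conj h) : G →* G) S) :=
      Nat.card_congr (Subgroup.equivMapOfInjective S _ (MulAut.conj h).injective).toEquiv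
    omega
  have hnormh : h ∈ Subgroup.normalizer (S : Set G) := by
    rw [Subgroup.mem_normalizer_iff]
    intro n
    constructor
    · intro hn
      have : ((MulAut.conj h) : G →* G) n ∈ Subgroup.map ((MulAut.conj h) : G →* G) S :=
        Subgroup.mem_map_of_mem _ hn
      rw [hmapS] at this
      simpa [MulAut.conj_apply] using this
    · intro hn
      rw [← hmapS] at hn
      obtain ⟨s, hs, he⟩ := hn
      have : s = n := by
        apply (MulAut.conj h).injective
        simpa [MulAut.conj_apply] using he
      rwa [← this]
  have hclosure : Subgroup.closure {(x : G), h} ≤ Subgroup.normalizer (S : Set G) := by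
    apply Subgroup.closure_le _ |>.mpr
    intro g hg
    rcases hg with rfl | hg
    · exact Subgroup.le_normalizer (Subgroup.mem_zpowers _)
    · rw [Set.mem_singleton_iff] at hg
      subst hg
      exact hnormh
  have harrow : arrow (x : G) h := by
    constructor
    intro a ha g
    rw [Subgroup.mem_subgroupOf] at ha ⊢
    have hgn : (g : G) ∈ Subgroup.normalizer (S : Set G) := hclosure g.2
    have : (g : G) * (a : G) * (g : G)⁻¹ ∈ S :=
      (Subgroup.mem_normalizer_iff.mp hgn (a : G)).mp ha
    simpa using this
  -- assemble the final answer
  obtain ⟨y, hyc, hyx⟩ := (hWmem (x : G)).mp ((hVmem _).mp x.2).1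
  refine ⟨y, hyc, by rw [hyx]; exact hxne, h, h'.2, hne1, ?_⟩
  rw [hyx]
  exact harrow
end
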